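/- arXiv:1710.10947 — 3 statements merged into one kernel-verified Lean document; each statement's English description precedes it below -/
import Mathlib

section
/- Let f : ℝ → ℝ be 2π-periodic and Lebesgue integrable on [0, 2π], and suppose that its Poisson integral vanishes identically on the open unit disk, i.e. for every ρ ∈ [0, 1) and every θ ∈ ℝ one has ∫₀^{2π} f(φ) · (1 − ρ²) / (1 − 2ρ·cos(θ − φ) + ρ²) dφ = 0. Then f(θ) = 0 for almost every θ ∈ [0, 2π]. Consequently, the solution of the Dirichlet problem on the unit disk with integrable boundary datum f given by the Poisson integral is unique: two integrable boundary data whose Poisson integrals coincide on the open unit disk are equal almost everywhere. -/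
/-!
The Poisson kernel is an approximate identity: for `g` continuous on `[0, 2π]` and `φ` in the
open interval, `∫ P_ρ(θ - φ) g(θ) dθ → 2π g(φ)` as `ρ → 1⁻`, with the bound `2π sup |g|`.
If the Poisson integral of `f` vanishes, Fubini gives `∫ f(φ) ∫ P_ρ(θ - φ) g(θ) dθ dφ = 0`, and
dominated convergence turns this into `∫ f g = 0` for every continuous `g`, so `f = 0` a.e.
Uniqueness is this applied to the difference of two boundary data.
-/

open MeasureTheory Filter Set Real Topology

lemma tendstoUniformlyOn_zero_of_abs_le {ι α : Type*} {l : Filter ι} {F : ι → α → ℝ}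
    {s : Set α} {b : ι → ℝ} (hb : Tendsto b l (𝓝 0)) (hF : ∀ᶠ i in l, ∀ x ∈ s, |F i x| ≤ b i) :
    TendstoUniformlyOn F 0 l s :=
  Metric.tendstoUniformlyOn_iff.2 fun ε hε => by
    filter_upwards [hF, hb.eventually (gt_mem_nhds hε)] with i hi hbi x hx
    simpa [dist_comm, Real.dist_eq] using (hi x hx).trans_lt hbi

theorem integral_mul_integral_kernel_mul_comm {α β : Type*} [MeasurableSpace α]
    [MeasurableSpace β] {μ : Measure α} {ν : Measure β} [SFinite μ] [SFinite ν] {f : α → ℝ}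
    {g : β → ℝ} {K : α → β → ℝ} (hf : Integrable f μ) (hg : Integrable g ν)
    (hK : AEStronglyMeasurable (Function.uncurry K) (μ.prod ν)) {C : ℝ}
    (hC : ∀ x y, |K x y| ≤ C) :
    ∫ x, f x * ∫ y, K x y * g y ∂ν ∂μ = ∫ y, g y * ∫ x, f x * K x y ∂μ ∂ν := by
  have hint : Integrable (fun p : α × β => f p.1 * K p.1 p.2 * g p.2) (μ.prod ν) := by
    refine ((hf.norm.mul_prod hg.norm).const_mul C).mono'
      ((hf.aestronglyMeasurable.comp_fst.mul hK).mul hg.aestronglyMeasurable.comp_snd) ?_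
    filter_upwards with p
    simp only [norm_mul, Real.norm_eq_abs]
    nlinarith [hC p.1 p.2, mul_nonneg (abs_nonneg (f p.1)) (abs_nonneg (g p.2))]
  calc ∫ x, f x * ∫ y, K x y * g y ∂ν ∂μ = ∫ x, ∫ y, f x * K x y * g y ∂ν ∂μ := by
        simp_rw [← integral_const_mul, mul_assoc]
    _ = ∫ y, ∫ x, f x * K x y * g y ∂μ ∂ν := integral_integral_swap hint
    _ = ∫ y, g y * ∫ x, f x * K x y ∂μ ∂ν := by
        simp_rw [← integral_const_mul, mul_comm (g _)]

noncomputable def diskPoissonKernel (ρ t : ℝ) : ℝ := (1 - ρ ^ 2) / (1 - 2 * ρ * cos t + ρ ^ 2)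

noncomputable def diskPoissonIntegral (f : ℝ → ℝ) (ρ θ : ℝ) : ℝ :=
  (2 * π)⁻¹ * ∫ φ in Icc 0 (2 * π), f φ * diskPoissonKernel ρ (θ - φ)

lemma sq_one_sub_abs_le_one_sub_two_mul_cos_add_sq (ρ t : ℝ) :
    (1 - |ρ|) ^ 2 ≤ 1 - 2 * ρ * cos t + ρ ^ 2 := by
  have : ρ * cos t ≤ |ρ| := (le_abs_self _).trans
    (by rw [abs_mul]; exact mul_le_of_le_one_right (abs_nonneg ρ) (abs_cos_le_one t))
  nlinarith [sq_abs ρ]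

lemma norm_circleMap_sub_circleMap_sq (ρ θ φ : ℝ) :
    ‖circleMap 0 1 θ - circleMap 0 ρ φ‖ ^ 2 = 1 - 2 * ρ * cos (θ - φ) + ρ ^ 2 := by
  rw [← Complex.normSq_eq_norm_sq, Complex.normSq_apply]
  simp only [circleMap, Complex.ofReal_one, one_mul, zero_add, Complex.sub_re, Complex.exp_re,
    Complex.mul_re, Complex.ofReal_re, Complex.I_re, mul_zero, Complex.ofReal_im, Complex.I_im,
    mul_one, sub_self, exp_zero, Complex.mul_im, add_zero, Complex.exp_im, zero_mul, sub_zero,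
    Complex.sub_im, cos_sub]
  nlinarith [sin_sq_add_cos_sq θ, sin_sq_add_cos_sq φ]

lemma diskPoissonKernel_sub_eq_poissonKernel (ρ θ φ : ℝ) :
    diskPoissonKernel ρ (θ - φ) = poissonKernel 0 (circleMap 0 ρ φ) (circleMap 0 1 θ) := by
  simp [poissonKernel, diskPoissonKernel, norm_circleMap_sub_circleMap_sq]

section Kernel

variable {ρ : ℝ}

lemma diskPoissonKernel_nonneg (hρ : |ρ| ≤ 1) (t : ℝ) : 0 ≤ diskPoissonKernel ρ t :=
  div_nonneg (by nlinarith [sq_abs ρ, abs_nonneg ρ])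
    ((sq_nonneg _).trans (sq_one_sub_abs_le_one_sub_two_mul_cos_add_sq ρ t))

lemma diskPoissonKernel_le (hρ : |ρ| < 1) (t : ℝ) :
    diskPoissonKernel ρ t ≤ ((1 - |ρ|) ^ 2)⁻¹ := by
  rw [← one_div]
  exact div_le_div₀ zero_le_one (by nlinarith [sq_nonneg ρ]) (pow_pos (sub_pos.2 hρ) 2)
    (sq_one_sub_abs_le_one_sub_two_mul_cos_add_sq ρ t)

lemma continuous_diskPoissonKernel (hρ : |ρ| < 1) : Continuous (diskPoissonKernel ρ) :=
  continuous_const.div (by fun_prop) fun t => ((pow_pos (sub_pos.2 hρ) 2).trans_le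
    (sq_one_sub_abs_le_one_sub_two_mul_cos_add_sq ρ t)).ne'

lemma measurable_diskPoissonKernel (ρ : ℝ) : Measurable (diskPoissonKernel ρ) := by
  unfold diskPoissonKernel; fun_prop

lemma diskPoissonKernel_le_of_le_one_sub_cos (h₀ : 0 < ρ) (h₁ : ρ ≤ 1) {t c : ℝ} (hc : 0 < c)
    (ht : c ≤ 1 - cos t) : diskPoissonKernel ρ t ≤ (1 - ρ ^ 2) / (2 * ρ * c) :=
  div_le_div_of_nonneg_left (by nlinarith) (by nlinarith) (by nlinarith)

/-- Poisson's formula on the unit disk for the constant function `1`. -/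
lemma integral_diskPoissonKernel_sub (hρ : |ρ| < 1) (φ : ℝ) :
    ∫ θ in Icc 0 (2 * π), diskPoissonKernel ρ (θ - φ) = 2 * π := by
  have hw : circleMap 0 ρ φ ∈ Metric.ball (0 : ℂ) 1 := by simpa using hρ
  have h := (diffContOnCl_const (c := (1 : ℂ))).circleAverage_poissonKernel_smul hw
  simp only [Real.circleAverage_def, Pi.smul_apply', ← diskPoissonKernel_sub_eq_poissonKernel,
    Complex.real_smul, mul_one, intervalIntegral.integral_ofReal, ← Complex.ofReal_mul,
    Complex.ofReal_eq_one, inv_mul_eq_one₀ two_pi_pos.ne'] at h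
  rw [integral_Icc_eq_integral_Ioc, ← intervalIntegral.integral_of_le two_pi_pos.le, ← h]

lemma abs_setIntegral_diskPoissonKernel_sub_mul_le (hρ : |ρ| < 1) {g : ℝ → ℝ} {M : ℝ}
    (hM : ∀ θ ∈ Icc 0 (2 * π), |g θ| ≤ M) (φ : ℝ) :
    |∫ θ in Icc 0 (2 * π), diskPoissonKernel ρ (θ - φ) * g θ| ≤ 2 * π * M := by
  have hP := diskPoissonKernel_nonneg hρ.le
  calc |∫ θ in Icc 0 (2 * π), diskPoissonKernel ρ (θ - φ) * g θ|
      ≤ ∫ θ in Icc 0 (2 * π), diskPoissonKernel ρ (θ - φ) * M := by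
        rw [← Real.norm_eq_abs]
        refine norm_integral_le_of_norm_le (((continuous_diskPoissonKernel hρ).comp
          (continuous_sub_right φ)).integrableOn_Icc (μ := volume) |>.mul_const M) ?_
        filter_upwards [ae_restrict_mem measurableSet_Icc] with θ hθ
        rw [norm_mul, Real.norm_of_nonneg (hP _), Real.norm_eq_abs]
        exact mul_le_mul_of_nonneg_left (hM θ hθ) (hP _)
    _ = 2 * π * M := by rw [integral_mul_const, integral_diskPoissonKernel_sub hρ]

end Kernel

lemma eventually_abs_lt_one_nhdsLT : ∀ᶠ ρ in 𝓝[<] (1 : ℝ), |ρ| < 1 :=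
  mem_of_superset (Ioo_mem_nhdsLT (neg_lt_self one_pos)) fun _ hρ => abs_lt.2 hρ

lemma exists_pos_le_one_sub_cos_sub {φ₀ : ℝ} (hφ₀ : φ₀ ∈ Ioo 0 (2 * π)) {u : Set ℝ}
    (hu : IsOpen u) (hφ₀u : φ₀ ∈ u) : ∃ c > 0, ∀ x ∈ Icc 0 (2 * π) \ u, c ≤ 1 - cos (x - φ₀) := by
  have hpos : ∀ x ∈ Icc 0 (2 * π) \ u, 0 < 1 - cos (x - φ₀) := by
    rintro x ⟨⟨hx₀, hx₁⟩, hxu⟩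
    refine sub_pos.2 ((cos_le_one _).lt_of_ne fun h => hxu ?_)
    have := (cos_eq_one_iff_of_lt_of_lt (by linarith [hφ₀.2]) (by linarith [hφ₀.1])).1 h
    rwa [sub_eq_zero.1 this]
  exact (isCompact_Icc.diff hu).exists_forall_le' (by fun_prop) hpos

lemma tendstoUniformlyOn_const_mul_diskPoissonKernel_sub {φ₀ : ℝ} (hφ₀ : φ₀ ∈ Ioo 0 (2 * π))
    {u : Set ℝ} (hu : IsOpen u) (hφ₀u : φ₀ ∈ u) (a : ℝ) :
    TendstoUniformlyOn (fun ρ x => a * diskPoissonKernel ρ (x - φ₀)) 0 (𝓝[<] 1)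
      (Icc 0 (2 * π) \ u) := by
  obtain ⟨c, hc, hcos⟩ := exists_pos_le_one_sub_cos_sub hφ₀ hu hφ₀u
  refine tendstoUniformlyOn_zero_of_abs_le (b := fun ρ => |a| * ((1 - ρ ^ 2) / (2 * ρ * c)))
    ?_ ?_
  · have : ContinuousAt (fun ρ : ℝ => |a| * ((1 - ρ ^ 2) / (2 * ρ * c))) 1 := by
      have : (2 : ℝ) * 1 * c ≠ 0 := by positivity
      fun_prop (disch := assumption)
    simpa using this.tendsto.mono_left nhdsWithin_le_nhds
  · filter_upwards [Ioo_mem_nhdsLT one_pos] with ρ hρ x hx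
    have hρ' : |ρ| ≤ 1 := abs_le.2 ⟨by linarith [hρ.1], hρ.2.le⟩
    rw [abs_mul, abs_of_nonneg (diskPoissonKernel_nonneg hρ' _)]
    exact mul_le_mul_of_nonneg_left
      (diskPoissonKernel_le_of_le_one_sub_cos hρ.1 hρ.2.le hc (hcos x hx)) (abs_nonneg a)

lemma tendsto_setIntegral_diskPoissonKernel_sub_mul {g : ℝ → ℝ}
    (hg : ContinuousOn g (Icc 0 (2 * π))) {φ₀ : ℝ} (hφ₀ : φ₀ ∈ Ioo 0 (2 * π)) :
    Tendsto (fun ρ => ∫ θ in Icc 0 (2 * π), diskPoissonKernel ρ (θ - φ₀) * g θ) (𝓝[<] 1)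
      (𝓝 (2 * π * g φ₀)) := by
  have hpeak : Tendsto (fun ρ => ∫ θ in Icc 0 (2 * π),
      ((2 * π)⁻¹ * diskPoissonKernel ρ (θ - φ₀)) • g θ) (𝓝[<] 1) (𝓝 (g φ₀)) := by
    refine tendsto_setIntegral_peak_smul_of_integrableOn_of_tendsto measurableSet_Icc
      measurableSet_Icc subset_rfl self_mem_nhdsWithin measure_Icc_lt_top.ne
      ?_ (fun u hu hφ₀u => tendstoUniformlyOn_const_mul_diskPoissonKernel_sub hφ₀ hu hφ₀u _) ?_
      (Eventually.of_forall fun ρ => (((measurable_diskPoissonKernel ρ).comp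
        (measurable_sub_const φ₀)).const_mul _).aestronglyMeasurable)
      hg.integrableOn_Icc (hg φ₀ (Ioo_subset_Icc_self hφ₀))
    · filter_upwards [eventually_abs_lt_one_nhdsLT] with ρ hρ x _
      exact mul_nonneg (by positivity) (diskPoissonKernel_nonneg hρ.le _)
    · refine tendsto_const_nhds.congr' ?_
      filter_upwards [eventually_abs_lt_one_nhdsLT] with ρ hρ
      rw [integral_const_mul, integral_diskPoissonKernel_sub hρ, inv_mul_cancel₀ two_pi_pos.ne']
  refine (hpeak.const_mul (2 * π)).congr fun ρ => ?_
  rw [← integral_const_mul]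
  refine setIntegral_congr_fun measurableSet_Icc fun θ _ => ?_
  simp only [smul_eq_mul]
  field_simp

lemma tendsto_setIntegral_mul_setIntegral_diskPoissonKernel_sub_mul {f g : ℝ → ℝ}
    (hf : IntegrableOn f (Icc 0 (2 * π))) (hg : ContinuousOn g (Icc 0 (2 * π))) :
    Tendsto (fun ρ => ∫ φ in Icc 0 (2 * π),
        f φ * ∫ θ in Icc 0 (2 * π), diskPoissonKernel ρ (θ - φ) * g θ)
      (𝓝[<] 1) (𝓝 (2 * π * ∫ φ in Icc 0 (2 * π), f φ * g φ)) := by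
  obtain ⟨M, hM⟩ := isCompact_Icc.exists_bound_of_continuousOn hg
  have hIoo : ∀ᵐ φ ∂volume.restrict (Icc 0 (2 * π)), φ ∈ Ioo 0 (2 * π) := by
    rw [← Measure.restrict_congr_set Ioo_ae_eq_Icc]
    exact ae_restrict_mem measurableSet_Ioo
  rw [← integral_const_mul]
  refine tendsto_integral_filter_of_dominated_convergence (fun φ => ‖f φ‖ * (2 * π * M))
    (Eventually.of_forall fun ρ => hf.aestronglyMeasurable.mul ?_) ?_ (hf.norm.mul_const _) ?_
  · refine AEStronglyMeasurable.integral_prod_right' (f := fun p : ℝ × ℝ =>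
      diskPoissonKernel ρ (p.2 - p.1) * g p.2) ?_
    exact ((measurable_diskPoissonKernel ρ).comp
      (measurable_snd.sub measurable_fst)).aestronglyMeasurable.mul
        (hg.aestronglyMeasurable measurableSet_Icc).comp_snd
  · filter_upwards [eventually_abs_lt_one_nhdsLT] with ρ hρ
    refine Eventually.of_forall fun φ => ?_
    rw [norm_mul]
    exact mul_le_mul_of_nonneg_left
      (abs_setIntegral_diskPoissonKernel_sub_mul_le hρ (fun θ hθ => hM θ hθ) φ) (norm_nonneg _)
  · filter_upwards [hIoo] with φ hφ
    convert (tendsto_setIntegral_diskPoissonKernel_sub_mul hg hφ).const_mul (f φ) using 2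
    ring

lemma setIntegral_mul_eq_zero_of_diskPoissonIntegral_eq_zero {f g : ℝ → ℝ}
    (hf : IntegrableOn f (Icc 0 (2 * π)))
    (hvanish : ∀ᶠ ρ in 𝓝[<] 1, ∀ θ, diskPoissonIntegral f ρ θ = 0)
    (hg : ContinuousOn g (Icc 0 (2 * π))) :
    ∫ φ in Icc 0 (2 * π), f φ * g φ = 0 := by
  have hzero : ∀ᶠ ρ in 𝓝[<] 1, ∫ φ in Icc 0 (2 * π),
      f φ * ∫ θ in Icc 0 (2 * π), diskPoissonKernel ρ (θ - φ) * g θ = 0 := by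
    filter_upwards [hvanish, eventually_abs_lt_one_nhdsLT] with ρ hvanish hρ
    have hu : ∀ θ, ∫ φ in Icc 0 (2 * π), f φ * diskPoissonKernel ρ (θ - φ) = 0 := fun θ => by
      simpa [diskPoissonIntegral, two_pi_pos.ne'] using hvanish θ
    rw [integral_mul_integral_kernel_mul_comm (K := fun φ θ => diskPoissonKernel ρ (θ - φ)) hf
      (hg.integrableOn_Icc (μ := volume)) ((measurable_diskPoissonKernel ρ).comp
        (measurable_snd.sub measurable_fst)).aestronglyMeasurable
      (C := ((1 - |ρ|) ^ 2)⁻¹) fun φ θ => ?_]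
    · simp [hu]
    · rw [abs_of_nonneg (diskPoissonKernel_nonneg hρ.le _)]
      exact diskPoissonKernel_le hρ _
  have := tendsto_nhds_unique
    (tendsto_setIntegral_mul_setIntegral_diskPoissonKernel_sub_mul hf hg)
    (tendsto_const_nhds.congr' (EventuallyEq.symm hzero))
  simpa [two_pi_pos.ne'] using this

theorem ae_eq_zero_of_diskPoissonIntegral_eq_zero {f : ℝ → ℝ}
    (hf : IntegrableOn f (Icc 0 (2 * π)))
    (hvanish : ∀ᶠ ρ in 𝓝[<] 1, ∀ θ, diskPoissonIntegral f ρ θ = 0) :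
    ∀ᵐ θ ∂volume.restrict (Icc 0 (2 * π)), f θ = 0 :=
  ae_eq_zero_of_integral_contDiff_smul_eq_zero hf.integrable.locallyIntegrable fun g hg _ => by
    simpa only [smul_eq_mul, mul_comm] using
      setIntegral_mul_eq_zero_of_diskPoissonIntegral_eq_zero hf hvanish hg.continuous.continuousOn

lemma diskPoissonIntegral_sub {g h : ℝ → ℝ} (hg : IntegrableOn g (Icc 0 (2 * π)))
    (hh : IntegrableOn h (Icc 0 (2 * π))) {ρ : ℝ} (hρ : |ρ| < 1) (θ : ℝ) :
    diskPoissonIntegral (g - h) ρ θ = diskPoissonIntegral g ρ θ - diskPoissonIntegral h ρ θ := by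
  have hP : ContinuousOn (fun φ => diskPoissonKernel ρ (θ - φ)) (Icc 0 (2 * π)) :=
    ((continuous_diskPoissonKernel hρ).comp (continuous_sub_left θ)).continuousOn
  simp only [diskPoissonIntegral, Pi.sub_apply, sub_mul, ← mul_sub]
  rw [integral_sub (hg.mul_continuousOn hP isCompact_Icc) (hh.mul_continuousOn hP isCompact_Icc)]

lemma intervalIntegral_mul_diskPoissonKernel (f : ℝ → ℝ) (ρ θ : ℝ) :
    ∫ φ in (0 : ℝ)..(2 * π), f φ * (1 - ρ ^ 2) / (1 - 2 * ρ * cos (θ - φ) + ρ ^ 2) =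
      2 * π * diskPoissonIntegral f ρ θ := by
  rw [diskPoissonIntegral, ← mul_assoc, mul_inv_cancel₀ two_pi_pos.ne', one_mul,
    integral_Icc_eq_integral_Ioc, ← intervalIntegral.integral_of_le two_pi_pos.le]
  simp only [diskPoissonKernel, mul_div_assoc]

theorem poisson_integral_vanishes_imp_ae_zero_and_uniqueness_general
    (f : ℝ → ℝ)
    (hint : IntervalIntegrable f volume 0 (2 * Real.pi))
    (hzero : ∀ ρ : ℝ, 0 ≤ ρ → ρ < 1 → ∀ θ : ℝ,
      (∫ φ in (0:ℝ)..(2 * Real.pi),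
        f φ * (1 - ρ ^ 2) / (1 - 2 * ρ * Real.cos (θ - φ) + ρ ^ 2)) = 0) :
    (∀ᵐ θ : ℝ ∂(volume.restrict (Icc (0 : ℝ) (2 * Real.pi))), f θ = 0) ∧
    (∀ g h : ℝ → ℝ,
      Function.Periodic g (2 * Real.pi) → Function.Periodic h (2 * Real.pi) →
      IntervalIntegrable g volume 0 (2 * Real.pi) →
      IntervalIntegrable h volume 0 (2 * Real.pi) →
      (∀ ρ : ℝ, 0 ≤ ρ → ρ < 1 → ∀ θ : ℝ,
        (1 / (2 * Real.pi)) * (∫ φ in (0:ℝ)..(2 * Real.pi),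
            g φ * (1 - ρ ^ 2) / (1 - 2 * ρ * Real.cos (θ - φ) + ρ ^ 2)) =
        (1 / (2 * Real.pi)) * ∫ φ in (0:ℝ)..(2 * Real.pi),
            h φ * (1 - ρ ^ 2) / (1 - 2 * ρ * Real.cos (θ - φ) + ρ ^ 2)) →
      ∀ᵐ θ : ℝ ∂(volume.restrict (Icc (0 : ℝ) (2 * Real.pi))), g θ = h θ) := by
  have hIcc {u : ℝ → ℝ} (hu : IntervalIntegrable u volume 0 (2 * π)) :
      IntegrableOn u (Icc 0 (2 * π)) :=
    (intervalIntegrable_iff_integrableOn_Icc_of_le two_pi_pos.le).1 hu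
  have hIco : ∀ᶠ ρ in 𝓝[<] (1 : ℝ), ρ ∈ Ico 0 1 := Ico_mem_nhdsLT one_pos
  refine ⟨ae_eq_zero_of_diskPoissonIntegral_eq_zero (hIcc hint) ?_,
    fun g h _ _ hg hh heq => ?_⟩
  · filter_upwards [hIco] with ρ hρ θ
    simpa [intervalIntegral_mul_diskPoissonKernel, two_pi_pos.ne'] using hzero ρ hρ.1 hρ.2 θ
  · have hvanish : ∀ᶠ ρ in 𝓝[<] 1, ∀ θ, diskPoissonIntegral (g - h) ρ θ = 0 := by
      filter_upwards [hIco] with ρ hρ θ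
      have := heq ρ hρ.1 hρ.2 θ
      simp only [intervalIntegral_mul_diskPoissonKernel, one_div, ← mul_assoc,
        inv_mul_cancel₀ two_pi_pos.ne', one_mul] at this
      rw [diskPoissonIntegral_sub (hIcc hg) (hIcc hh) (abs_lt.2 ⟨by linarith [hρ.1], hρ.2⟩),
        this, sub_self]
    filter_upwards [ae_eq_zero_of_diskPoissonIntegral_eq_zero ((hIcc hg).sub (hIcc hh)) hvanish]
      with θ hθ using sub_eq_zero.1 hθ

/-- If the Poisson integral of a 2π-periodic integrable real function `f`
vanishes identically on the open unit disk, then `f = 0` almost everywhere on `[0, 2π]`.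
Consequently, the Poisson-integral solution of the Dirichlet problem on the unit disk is
unique: two integrable boundary data whose Poisson integrals coincide on the open unit disk
are equal almost everywhere. -/
theorem poisson_integral_vanishes_imp_ae_zero_and_uniqueness
    (f : ℝ → ℝ)
    (hper : Function.Periodic f (2 * Real.pi))
    (hint : IntervalIntegrable f volume 0 (2 * Real.pi))
    (hzero : ∀ ρ : ℝ, 0 ≤ ρ → ρ < 1 → ∀ θ : ℝ,
      (∫ φ in (0:ℝ)..(2 * Real.pi),
        f φ * (1 - ρ ^ 2) / (1 - 2 * ρ * Real.cos (θ - φ) + ρ ^ 2)) = 0) :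
    (∀ᵐ θ : ℝ ∂(volume.restrict (Icc (0 : ℝ) (2 * Real.pi))), f θ = 0) ∧
    (∀ g h : ℝ → ℝ,
      Function.Periodic g (2 * Real.pi) → Function.Periodic h (2 * Real.pi) →
      IntervalIntegrable g volume 0 (2 * Real.pi) →
      IntervalIntegrable h volume 0 (2 * Real.pi) →
      (∀ ρ : ℝ, 0 ≤ ρ → ρ < 1 → ∀ θ : ℝ,
        (1 / (2 * Real.pi)) * (∫ φ in (0:ℝ)..(2 * Real.pi),
            g φ * (1 - ρ ^ 2) / (1 - 2 * ρ * Real.cos (θ - φ) + ρ ^ 2)) =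
        (1 / (2 * Real.pi)) * ∫ φ in (0:ℝ)..(2 * Real.pi),
            h φ * (1 - ρ ^ 2) / (1 - 2 * ρ * Real.cos (θ - φ) + ρ ^ 2)) →
      ∀ᵐ θ : ℝ ∂(volume.restrict (Icc (0 : ℝ) (2 * Real.pi))), g θ = h θ) :=
  poisson_integral_vanishes_imp_ae_zero_and_uniqueness_general f hint hzero
end

section
/- Let U ⊆ ℂ be an open set containing the closed unit disk {z : ℂ | |z| ≤ 1}, let γ : ℂ → ℂ be holomorphic on U and injective on the closed unit disk, and suppose the set of zeros of γ' on the unit circle is a finite set {exp(iθ₁), …, exp(iθ_N)}. Let F : ℂ → ℝ be a measurable function such that (i) the function θ ↦ F(γ(exp(iθ)))·|γ'(exp(iθ))| is Lebesgue integrable on [0, 2π] (integrability of F on the image curve with respect to arc length), and (ii) for each i ∈ {1, …, N} there exists ε_i > 0 such that θ ↦ F(γ(exp(iθ))) is bounded on (θ_i − ε_i, θ_i + ε_i), i.e., the points where F is unbounded on the curve do not coincide with the points where the curve is non-differentiable. Then the function θ ↦ F(γ(exp(iθ))) is Lebesgue integrable on [0, 2π]. -/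
open MeasureTheory Filter Set
open scoped Interval

/-! Near the zeros `e^{iθᵢ}` of `γ'` the function `F ∘ γ` is bounded by hypothesis. Off small
neighbourhoods of the `θᵢ` (and of their `2π`-translates), the continuous weight
`θ ↦ |γ'(e^{iθ})|` does not vanish on a compact set, so it is bounded below by some `c > 0`
there, and `|F ∘ γ| ≤ c⁻¹ |F ∘ γ| |γ'|` is dominated by the integrable arc-length integrand. -/

theorem IsCompact.exists_pos_forall_le_norm {X E : Type*} [TopologicalSpace X]
    [NormedAddCommGroup E] {K : Set X} {g : X → E} (hK : IsCompact K) (hg : ContinuousOn g K)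
    (hg0 : ∀ x ∈ K, g x ≠ 0) : ∃ c > 0, ∀ x ∈ K, c ≤ ‖g x‖ := by
  rcases K.eq_empty_or_nonempty with rfl | hne
  · exact ⟨1, one_pos, by simp⟩
  obtain ⟨x₀, hx₀, hmin⟩ := hK.exists_isMinOn hne hg.norm
  exact ⟨‖g x₀‖, norm_pos_iff.mpr (hg0 x₀ hx₀), fun x hx => hmin hx⟩

theorem IntervalIntegrable.of_smul_of_bounded_near_zeros {E : Type*} [NormedAddCommGroup E]
    [NormedSpace ℝ E] {μ : Measure ℝ} [IsLocallyFiniteMeasure μ] {f : ℝ → E} {ρ : ℝ → ℝ}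
    {a b M : ℝ} {V : Set ℝ} (hρf : IntervalIntegrable (fun x => ρ x • f x) μ a b)
    (hf : AEStronglyMeasurable f (μ.restrict (Ι a b))) (hρ : ContinuousOn ρ [[a, b]])
    (hV : IsOpen V) (hfV : ∀ x ∈ V, ‖f x‖ ≤ M) (hρV : ∀ x ∈ [[a, b]], ρ x = 0 → x ∈ V) :
    IntervalIntegrable f μ a b := by
  obtain ⟨c, hc, hcρ⟩ := (isCompact_uIcc.diff hV).exists_pos_forall_le_norm
    (hρ.mono sdiff_subset) fun x hx h0 => hx.2 (hρV x hx.1 h0)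
  have hbound : ∀ x ∈ [[a, b]], ‖f x‖ ≤ |M| + c⁻¹ * ‖ρ x • f x‖ := by
    intro x hx
    have hnonneg : 0 ≤ c⁻¹ * ‖ρ x • f x‖ := by positivity
    by_cases hxV : x ∈ V
    · linarith [hfV x hxV, le_abs_self M]
    · have hfx : ‖f x‖ ≤ c⁻¹ * ‖ρ x • f x‖ := by
        rw [le_inv_mul_iff₀ hc, norm_smul]
        exact mul_le_mul_of_nonneg_right (hcρ x ⟨hx, hxV⟩) (norm_nonneg _)
      linarith [abs_nonneg M]
  refine ((intervalIntegrable_const (c := |M|)).add (hρf.norm.const_mul c⁻¹)).mono_fun' hf ?_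
  filter_upwards [ae_restrict_mem measurableSet_uIoc] with x hx
  exact hbound x (uIoc_subset_uIcc hx)

theorem Function.Periodic.forall_mem_Ioo_add_int_mul {α : Type*} {f : ℝ → α} {c t ε : ℝ}
    {P : α → Prop} (hf : Function.Periodic f c) (h : ∀ x ∈ Ioo (t - ε) (t + ε), P (f x))
    (k : ℤ) : ∀ x ∈ Ioo (t + k * c - ε) (t + k * c + ε), P (f x) := by
  intro x hx
  rw [← hf.sub_int_mul_eq k]
  exact h _ ⟨by linarith [hx.1], by linarith [hx.2]⟩

theorem Complex.exp_ofReal_mul_I_eq_exp_ofReal_mul_I_iff {x y : ℝ} :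
    exp (x * I) = exp (y * I) ↔ ∃ k : ℤ, x = y + k * (2 * Real.pi) := by
  rw [← Circle.coe_exp, ← Circle.coe_exp, Circle.coe_inj, Circle.exp_eq_exp]

theorem integrable_pullback_of_arcLength_integrable_nondiffble_curve_general
    (U : Set ℂ) (hU : IsOpen U) (hsub : Metric.closedBall (0 : ℂ) 1 ⊆ U)
    (γ : ℂ → ℂ) (hγ : DifferentiableOn ℂ γ U)
    (N : ℕ) (θs : Fin N → ℝ)
    (hzeros : ∀ z : ℂ, ‖z‖ = 1 →
      (deriv γ z = 0 ↔ ∃ i : Fin N, z = Complex.exp ((θs i : ℂ) * Complex.I)))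
    (F : ℂ → ℝ) (hF : Measurable F)
    (hint : IntervalIntegrable (fun θ : ℝ =>
        F (γ (Complex.exp ((θ : ℂ) * Complex.I))) *
          ‖deriv γ (Complex.exp ((θ : ℂ) * Complex.I))‖)
      volume 0 (2 * Real.pi))
    (hbdd : ∀ i : Fin N, ∃ ε : ℝ, 0 < ε ∧ ∃ M : ℝ,
      ∀ θ ∈ Ioo (θs i - ε) (θs i + ε),
        |F (γ (Complex.exp ((θ : ℂ) * Complex.I)))| ≤ M) :
    IntervalIntegrable (fun θ : ℝ => F (γ (Complex.exp ((θ : ℂ) * Complex.I))))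
      volume 0 (2 * Real.pi) := by
  let e : ℝ → ℂ := fun θ => Complex.exp ((θ : ℂ) * Complex.I)
  have he_mem : ∀ θ, e θ ∈ U := fun θ => hsub (by simp [e])
  have he_cont : Continuous e := by fun_prop
  have hper : Function.Periodic (fun θ => F (γ (e θ))) (2 * Real.pi) := fun θ => by
    simp only [e, Complex.ofReal_add, Complex.ofReal_mul, Complex.ofReal_ofNat,
      Complex.exp_mul_I_periodic _]
  choose ε hε M hM using hbdd
  have hM_le (i : Fin N) : M i ≤ ∑ j, |M j| := (le_abs_self _).trans
    (Finset.single_le_sum (f := fun j => |M j|) (fun j _ => abs_nonneg _) (Finset.mem_univ i))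
  refine .of_smul_of_bounded_near_zeros (f := fun θ => F (γ (e θ)))
    (ρ := fun θ => ‖deriv γ (e θ)‖) (M := ∑ i, |M i|)
    (V := ⋃ (i) (k : ℤ), Ioo (θs i + k * (2 * Real.pi) - ε i) (θs i + k * (2 * Real.pi) + ε i))
    (hint.congr fun θ _ => mul_comm _ _)
    (hF.comp (hγ.continuousOn.comp_continuous he_cont he_mem).measurable).aestronglyMeasurable
    (((hγ.analyticOnNhd hU).deriv.continuousOn.comp_continuous he_cont he_mem).norm.continuousOn)
    (isOpen_iUnion fun _ => isOpen_iUnion fun _ => isOpen_Ioo) ?bounded ?zeros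
  case bounded =>
    simp only [mem_iUnion]
    rintro θ ⟨i, k, hθ⟩
    exact (hper.forall_mem_Ioo_add_int_mul (P := fun y => ‖y‖ ≤ M i) (hM i) k θ hθ).trans (hM_le i)
  case zeros =>
    intro θ _ hθ
    obtain ⟨i, hi⟩ := (hzeros (e θ) (by simp [e])).mp (norm_eq_zero.mp hθ)
    obtain ⟨k, rfl⟩ := Complex.exp_ofReal_mul_I_eq_exp_ofReal_mul_I_iff.mp hi
    exact mem_iUnion₂.mpr ⟨i, k, by linarith [hε i], by linarith [hε i]⟩

/-- If `γ` maps the unit circle conformally onto a simple closed curve which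
may be non-differentiable at finitely many points (the zeros `e^{iθᵢ}` of `γ'` on the circle),
`F` is integrable on the image curve with respect to arc length, and `F` is bounded near each
of the points of the curve corresponding to the zeros of `γ'`, then the induced boundary
function `θ ↦ F(γ(e^{iθ}))` is integrable on `[0, 2π]`. -/
theorem integrable_pullback_of_arcLength_integrable_nondiffble_curve
    (U : Set ℂ) (hU : IsOpen U) (hsub : Metric.closedBall (0 : ℂ) 1 ⊆ U)
    (γ : ℂ → ℂ) (hγ : DifferentiableOn ℂ γ U)
    (hinj : InjOn γ (Metric.closedBall (0 : ℂ) 1))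
    (N : ℕ) (θs : Fin N → ℝ)
    (hzeros : ∀ z : ℂ, ‖z‖ = 1 →
      (deriv γ z = 0 ↔ ∃ i : Fin N, z = Complex.exp ((θs i : ℂ) * Complex.I)))
    (F : ℂ → ℝ) (hF : Measurable F)
    (hint : IntervalIntegrable (fun θ : ℝ =>
        F (γ (Complex.exp ((θ : ℂ) * Complex.I))) *
          ‖deriv γ (Complex.exp ((θ : ℂ) * Complex.I))‖)
      volume 0 (2 * Real.pi))
    (hbdd : ∀ i : Fin N, ∃ ε : ℝ, 0 < ε ∧ ∃ M : ℝ,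
      ∀ θ ∈ Ioo (θs i - ε) (θs i + ε),
        |F (γ (Complex.exp ((θ : ℂ) * Complex.I)))| ≤ M) :
    IntervalIntegrable (fun θ : ℝ => F (γ (Complex.exp ((θ : ℂ) * Complex.I))))
      volume 0 (2 * Real.pi) :=
  integrable_pullback_of_arcLength_integrable_nondiffble_curve_general U hU hsub γ hγ N θs hzeros F
    hF hint hbdd
end

section
/- Let f : ℝ → ℝ be 2π-periodic and Lebesgue integrable on [0, 2π], let c₀ = (1/(2π)) ∫₀^{2π} f(θ) dθ and c_k = (1/π) ∫₀^{2π} f(θ)·exp(−ikθ) dθ for k ≥ 1, and let H(z) = (1/(2π)) ∫₀^{2π} f(φ)·(exp(iφ) + z)/(exp(iφ) − z) dφ be the Herglotz transform of f. Then for all z ∈ ℂ with |z| < 1, Re H(z) = Re( ∑_{k=0}^∞ c_k z^k ) and Im H(z) = Im( ∑_{k=1}^∞ c_k z^k ); that is, the analytic function constructed from the Fourier coefficients of f and the Herglotz integral of f differ only by a purely imaginary constant, and in particular have identical real parts on the open unit disk. -/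
open MeasureTheory Filter Set

/-- The inner analytic function constructed from the Fourier coefficients of
a 2π-periodic integrable real function `f` and the Herglotz transform of `f` differ only by a
purely imaginary constant on the open unit disk: they have identical real parts, and the
imaginary part of the Herglotz transform equals the imaginary part of the power series with
its constant term removed. -/
theorem herglotz_eq_innerAnalytic_up_to_imaginary_constant
    (f : ℝ → ℝ)
    (hper : Function.Periodic f (2 * Real.pi))
    (hint : IntervalIntegrable f volume 0 (2 * Real.pi))
    (c : ℕ → ℂ)
    (hc0 : c 0 = ((1 / (2 * Real.pi) : ℝ) : ℂ) * ∫ θ in (0:ℝ)..(2 * Real.pi), (f θ : ℂ))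
    (hck : ∀ k : ℕ, 1 ≤ k →
      c k = ((1 / Real.pi : ℝ) : ℂ) * ∫ θ in (0:ℝ)..(2 * Real.pi),
        (f θ : ℂ) * Complex.exp (-(k : ℂ) * (θ : ℂ) * Complex.I))
    (H : ℂ → ℂ)
    (hH : ∀ z : ℂ, H z = ((1 / (2 * Real.pi) : ℝ) : ℂ) *
      ∫ φ in (0:ℝ)..(2 * Real.pi),
        (f φ : ℂ) * (Complex.exp ((φ : ℂ) * Complex.I) + z) /
          (Complex.exp ((φ : ℂ) * Complex.I) - z)) :
    ∀ z : ℂ, ‖z‖ < 1 →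
      (H z).re = (∑' k : ℕ, c k * z ^ k).re ∧
      (H z).im = (∑' k : ℕ, c (k + 1) * z ^ (k + 1)).im := by
  intro z hz
  set g : ℕ → ℝ → ℂ := fun k φ =>
    (f φ : ℂ) * (if k = 0 then 1 else 2 * (z * Complex.exp (-(φ : ℂ) * Complex.I)) ^ k) with hg
  -- norm of the exponential is 1
  have habs : ∀ φ : ℝ, ‖Complex.exp (-(φ : ℂ) * Complex.I)‖ = 1 := by
    intro φ
    rw [Complex.norm_exp]
    simp
  have habs' : ∀ φ : ℝ, ‖Complex.exp ((φ : ℂ) * Complex.I)‖ = 1 := by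
    intro φ
    rw [Complex.norm_exp]
    simp
  -- pointwise HasSum
  have hpt : ∀ φ : ℝ, HasSum (fun k => g k φ)
      ((f φ : ℂ) * (Complex.exp ((φ : ℂ) * Complex.I) + z) /
        (Complex.exp ((φ : ℂ) * Complex.I) - z)) := by
    intro φ
    set w := Complex.exp ((φ : ℂ) * Complex.I) with hw
    set e := Complex.exp (-(φ : ℂ) * Complex.I) with he
    have hwe : w * e = 1 := by
      rw [hw, he, ← Complex.exp_add]
      ring_nf
      exact Complex.exp_zero
    have hq : ‖z * e‖ < 1 := by
      rw [norm_mul]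
      rw [habs φ, mul_one]; exact hz
    have h1q : (1 : ℂ) - z * e ≠ 0 := by
      intro h
      have : (1 : ℂ) = z * e := by linear_combination h
      rw [← this] at hq; simp at hq
    have hwz : w - z ≠ 0 := by
      intro h
      have hwz' : w = z := by linear_combination h
      have := habs' φ
      rw [← hw, hwz'] at this
      rw [this] at hz; exact lt_irrefl _ hz
    have h1 : HasSum (fun k : ℕ => (2 * (f φ : ℂ)) * (z * e) ^ k)
        ((2 * (f φ : ℂ)) * (1 - z * e)⁻¹) :=
      (hasSum_geometric_of_norm_lt_one hq).mul_left _
    have h2 : HasSum (fun k : ℕ => if k = 0 then -(f φ : ℂ) else 0) (-(f φ : ℂ)) :=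
      hasSum_ite_eq 0 _
    have h3 := h1.add h2
    have hfun : (fun k : ℕ => (2 * (f φ : ℂ)) * (z * e) ^ k +
        (if k = 0 then -(f φ : ℂ) else 0)) = fun k => g k φ := by
      funext k
      rcases k with _ | k
      · simp only [hg]; norm_num; ring
      · simp only [hg, if_neg k.succ_ne_zero]; ring
    rw [hfun] at h3
    convert h3 using 1
    have hinv : (1 - z * e)⁻¹ = w / (w - z) := by
      rw [eq_div_iff hwz, inv_mul_eq_iff_eq_mul₀ h1q]
      linear_combination z * hwe
    rw [hinv]
    field_simp
    ring
  -- measurability of f on the interval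
  have hmeas : AEStronglyMeasurable f (volume.restrict (Set.uIoc (0:ℝ) (2 * Real.pi))) :=
    (intervalIntegrable_iff.mp hint).aestronglyMeasurable
  -- HasSum of integrals
  have hS : HasSum (fun k => ∫ φ in (0:ℝ)..(2 * Real.pi), g k φ)
      (∫ φ in (0:ℝ)..(2 * Real.pi),
        (f φ : ℂ) * (Complex.exp ((φ : ℂ) * Complex.I) + z) /
          (Complex.exp ((φ : ℂ) * Complex.I) - z)) := by
    apply intervalIntegral.hasSum_integral_of_dominated_convergence
      (bound := fun k t => |f t| * (2 * ‖z‖ ^ k))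
    · intro k
      apply AEStronglyMeasurable.mul
        (Complex.continuous_ofReal.comp_aestronglyMeasurable hmeas)
      apply Continuous.aestronglyMeasurable
      rcases k with _ | k
      · simp only [if_pos rfl]; exact continuous_const
      · simp only [if_neg k.succ_ne_zero]; fun_prop
    · intro k
      filter_upwards with t ht
      rcases k with _ | k
      · simp only [hg, reduceIte, mul_one, norm_mul, Complex.norm_real,
          Real.norm_eq_abs, pow_zero, norm_one]
        nlinarith [abs_nonneg (f t)]
      · have : ‖g (k+1) t‖ = |f t| * (2 * ‖z‖ ^ (k+1)) := by
          simp only [hg, if_neg k.succ_ne_zero]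
          rw [norm_mul, norm_mul, norm_pow, norm_mul]
          simp only [Complex.norm_real, Real.norm_eq_abs, habs t, mul_one,
            Complex.norm_two]
        rw [this]
    · filter_upwards with t ht
      exact (((summable_geometric_of_lt_one (norm_nonneg z) hz).mul_left 2).mul_left _)
    · have : (fun t => ∑' k : ℕ, |f t| * (2 * ‖z‖ ^ k)) =
          fun t => |f t| * ∑' k : ℕ, (2 * ‖z‖ ^ k) := by
        funext t; exact tsum_mul_left
      rw [this]
      exact hint.norm.mul_const _
    · filter_upwards with t ht
      exact hpt t
  -- identify each coefficient
  have hcoef : ∀ k : ℕ, ((1 / (2 * Real.pi) : ℝ) : ℂ) * ∫ φ in (0:ℝ)..(2 * Real.pi), g k φ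
      = c k * z ^ k := by
    intro k
    rcases k with _ | k
    · simp only [hg, if_true, mul_one, pow_zero, hc0]
    · have h1 : ∀ φ : ℝ, g (k+1) φ =
          (2 * z ^ (k+1)) * ((f φ : ℂ) * Complex.exp (-((k+1:ℕ) : ℂ) * (φ : ℂ) * Complex.I)) := by
        intro φ
        simp only [hg, if_neg k.succ_ne_zero, mul_pow]
        rw [show (-((k+1:ℕ) : ℂ) * (φ : ℂ) * Complex.I)
            = ((k+1:ℕ) : ℂ) * (-(φ : ℂ) * Complex.I) by push_cast; ring,
          Complex.exp_nat_mul]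
        ring
      simp_rw [h1]
      rw [intervalIntegral.integral_const_mul]
      rw [hck (k+1) (Nat.le_add_left 1 k)]
      have hpi : (Real.pi : ℂ) ≠ 0 := by
        exact_mod_cast Real.pi_ne_zero
      push_cast
      field_simp
      congr 1
      apply intervalIntegral.integral_congr
      intro x _
      ring_nf
  have hSc : HasSum (fun k => c k * z ^ k) (H z) := by
    have := hS.mul_left ((1 / (2 * Real.pi) : ℝ) : ℂ)
    simp_rw [hcoef] at this
    rw [hH z]
    convert this using 2
  have hHz : H z = ∑' k, c k * z ^ k := hSc.tsum_eq.symm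
  have hsplit : ∑' k : ℕ, c k * z ^ k = c 0 * z ^ 0 + ∑' k : ℕ, c (k+1) * z ^ (k+1) :=
    Summable.tsum_eq_zero_add hSc.summable
  have hc0im : (c 0).im = 0 := by
    rw [hc0, intervalIntegral.integral_ofReal]
    simp [← Complex.ofReal_mul]
  constructor
  · rw [hHz]
  · rw [hHz, hsplit]
    simp [Complex.add_im, hc0im]
end
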